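/- Let A + λB ∈ ℂ[λ]₁^{n×n} and define f(Q,Z) = Σ_{i>j}(|(QAZ)_{ij}|² + |(QBZ)_{ij}|²) + min_{1≤i≤n}(|(QAZ)_{ii}|² + |(QBZ)_{ii}|²) for (Q,Z) ∈ U(n)×U(n). Then min over all singular pencils S + λT of ‖(A−S) + λ(B−T)‖_F² equals min over (Q,Z) ∈ U(n)×U(n) of f(Q,Z). -/

import Mathlib

open Polynomial Matrix

noncomputable def pencilPoly {n : ℕ} (A B : Matrix (Fin n) (Fin n) ℂ) :
    Matrix (Fin n) (Fin n) (Polynomial ℂ) :=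
  Matrix.of fun i j => C (A i j) + X * C (B i j)

noncomputable def pencilNormSq {n : ℕ} (A B : Matrix (Fin n) (Fin n) ℂ) : ℝ :=
  (∑ i, ∑ j, ‖A i j‖ ^ 2) + ∑ i, ∑ j, ‖B i j‖ ^ 2

/-- The objective function `f(Q,Z)` : sum of squared moduli of the strictly lower
triangular entries of `QAZ, QBZ` plus the minimal squared modulus of a diagonal pair. -/
noncomputable def objFun {n : ℕ} (hn : 0 < n) (A B Q Z : Matrix (Fin n) (Fin n) ℂ) : ℝ :=
  (∑ i, ∑ j, if j < i then ‖(Q * A * Z) i j‖ ^ 2 + ‖(Q * B * Z) i j‖ ^ 2 else 0) +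
    Finset.univ.inf' ⟨⟨0, hn⟩, Finset.mem_univ _⟩
      (fun i => ‖(Q * A * Z) i i‖ ^ 2 + ‖(Q * B * Z) i i‖ ^ 2)

/-!
Every pencil is unitarily equivalent to an upper triangular one (generalized Schur form): some
`v ≠ 0` is mapped by `S` and `T` into a common line (take `v ∈ ker T`, or an eigenvector of
`T⁻¹S`), and deflating this direction by unitaries reduces the size by one. An upper triangular
pencil is singular iff some diagonal pair vanishes, so the nearest singular upper triangular
pencil to `M + λN` keeps its upper triangle except the smallest diagonal pair, at squared
distance `triangularDistSq M N`, and `f(Q, Z) = triangularDistSq (QAZ) (QBZ)`. As singularity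
and the Frobenius norm are invariant under `(S, T) ↦ (QSZ, QTZ)`, the two minima agree.
-/

section CommonDirection

variable {ι : Type*} [Fintype ι] [DecidableEq ι]

theorem exists_mulVec_eq_smul_and_mulVec_eq_smul {K : Type*} [Nonempty ι] [Field K]
    [IsAlgClosed K] (S T : Matrix ι ι K) :
    ∃ v ≠ 0, ∃ w : ι → K, ∃ s t : K, S *ᵥ v = s • w ∧ T *ᵥ v = t • w := by
  by_cases hT : T.det = 0
  · obtain ⟨v, hv, hTv⟩ := exists_mulVec_eq_zero_iff.mpr hT
    exact ⟨v, hv, S *ᵥ v, 1, 0, by simp, by simp [hTv]⟩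
  · obtain ⟨μ, hμ⟩ := Module.End.exists_eigenvalue (toLin' (T⁻¹ * S))
    obtain ⟨v, hv⟩ := hμ.exists_hasEigenvector
    have hSv : (T⁻¹ * S) *ᵥ v = μ • v := by simpa using hv.apply_eq_smul
    refine ⟨v, hv.2, T *ᵥ v, μ, 1, ?_, by simp⟩
    rw [← mulVec_smul, ← hSv, mulVec_mulVec, ← Matrix.mul_assoc,
      mul_nonsing_inv _ (isUnit_iff_ne_zero.mpr hT), Matrix.one_mul]

theorem exists_unitary_mulVec_eq_single {𝕜 : Type*} [RCLike 𝕜] (v : ι → 𝕜) (k : ι) :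
    ∃ U ∈ unitaryGroup ι 𝕜, ∃ c : 𝕜, U *ᵥ v = Pi.single k c := by
  obtain rfl | hv := eq_or_ne v 0
  · exact ⟨1, one_mem _, 0, by simp⟩
  set x : EuclideanSpace 𝕜 ι := WithLp.toLp 2 v
  have hx : x ≠ 0 := by simpa [x] using hv
  have hu : Orthonormal 𝕜 (({k} : Set ι).domRestrict fun _ => (‖x‖⁻¹ : 𝕜) • x) := by
    rw [orthonormal_iff_ite]
    rintro ⟨i, rfl⟩ ⟨j, rfl⟩
    simpa using inner_self_eq_one_of_norm_eq_one (𝕜 := 𝕜) (norm_smul_inv_norm (𝕜 := 𝕜) hx)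
  obtain ⟨b, hb⟩ := hu.exists_orthonormalBasis_extension_of_card_eq (by simp)
  set c : 𝕜 := (‖x‖ : 𝕜)
  have hbk : c • b k = x := by
    rw [hb k rfl, smul_smul, mul_inv_cancel₀ (by simpa [c] using hx), one_smul]
  -- `U` takes coordinates in the standard basis to coordinates in `b`, and `x = c • b k`.
  refine ⟨_, b.toMatrix_orthonormalBasis_mem_unitary (EuclideanSpace.basisFun ι 𝕜), c, ?_⟩
  have h := (EuclideanSpace.basisFun ι 𝕜).toBasis.toMatrix_mulVec_repr b.toBasis x
  have hrepr : ⇑((EuclideanSpace.basisFun ι 𝕜).toBasis.repr x) = v := by ext i; simp [x]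
  simp only [OrthonormalBasis.coe_toBasis, hrepr] at h
  ext i
  rw [h, OrthonormalBasis.coe_toBasis_repr_apply, ← hbk, map_smul, b.repr_self]
  simp [Pi.single_apply]

theorem exists_unitary_mul_mul_apply_eq_zero (S T : Matrix ι ι ℂ) (k : ι) :
    ∃ Q ∈ unitaryGroup ι ℂ, ∃ Z ∈ unitaryGroup ι ℂ,
      ∀ i ≠ k, (Q * S * Z) i k = 0 ∧ (Q * T * Z) i k = 0 := by
  have : Nonempty ι := ⟨k⟩
  obtain ⟨v, hv, w, s, t, hSv, hTv⟩ := exists_mulVec_eq_smul_and_mulVec_eq_smul S T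
  obtain ⟨P, hP, c, hPv⟩ := exists_unitary_mulVec_eq_single v k
  obtain ⟨Q, hQ, d, hQw⟩ := exists_unitary_mulVec_eq_single w k
  have hvc : star P *ᵥ Pi.single k c = v := by
    rw [← hPv, mulVec_mulVec, mem_unitaryGroup_iff'.mp hP, one_mulVec]
  have hc : c ≠ 0 := by
    rintro rfl
    exact hv (by simpa using hvc.symm)
  have hZk : (star P).col k = c⁻¹ • v := by
    rw [← hvc, ← mulVec_smul, ← Pi.single_smul', smul_eq_mul, inv_mul_cancel₀ hc,
      mulVec_single_one]
  have hcol {M : Matrix ι ι ℂ} {r : ℂ} (hM : M *ᵥ v = r • w) (i : ι) (hi : i ≠ k) :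
      (Q * M * star P) i k = 0 := by
    have h : (Q * M * star P).col k = (c⁻¹ * r) • Pi.single k d := by
      rw [← mulVec_single_one, ← mulVec_mulVec, mulVec_single_one, hZk, mulVec_smul,
        ← mulVec_mulVec, hM, mulVec_smul, hQw, smul_smul]
    simpa [hi] using congrFun h i
  exact ⟨Q, hQ, star P, Unitary.star_mem hP, fun i hi => ⟨hcol hSv i hi, hcol hTv i hi⟩⟩

end CommonDirection

namespace Matrix

variable {R : Type*} {m : ℕ}

def blockDiagOne [Zero R] [One R] (U : Matrix (Fin m) (Fin m) R) :
    Matrix (Fin (m + 1)) (Fin (m + 1)) R :=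
  of (Fin.cons (Fin.cons 1 0) fun i => Fin.cons 0 (U i))

section Apply

variable [Zero R] [One R] (U : Matrix (Fin m) (Fin m) R)

@[simp] lemma blockDiagOne_zero_zero : blockDiagOne U 0 0 = 1 := rfl
@[simp] lemma blockDiagOne_zero_succ (j : Fin m) : blockDiagOne U 0 j.succ = 0 := rfl
@[simp] lemma blockDiagOne_succ_zero (i : Fin m) : blockDiagOne U i.succ 0 = 0 := rfl
@[simp] lemma blockDiagOne_succ_succ (i j : Fin m) : blockDiagOne U i.succ j.succ = U i j := rfl

end Apply

lemma blockDiagOne_mul [Semiring R] (U V : Matrix (Fin m) (Fin m) R) :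
    blockDiagOne (U * V) = blockDiagOne U * blockDiagOne V := by
  ext i j
  cases i using Fin.cases <;> cases j using Fin.cases <;> simp [mul_apply, Fin.sum_univ_succ]

@[simp] lemma blockDiagOne_one [Semiring R] :
    blockDiagOne (1 : Matrix (Fin m) (Fin m) R) = 1 := by
  ext i j
  cases i using Fin.cases <;> cases j using Fin.cases <;>
    simp [one_apply, (Fin.succ_ne_zero _).symm]

lemma star_blockDiagOne [Semiring R] [StarRing R] (U : Matrix (Fin m) (Fin m) R) :
    star (blockDiagOne U) = blockDiagOne (star U) := by
  ext i j
  cases i using Fin.cases <;> cases j using Fin.cases <;> simp [star_apply]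

lemma blockDiagOne_mem_unitaryGroup [CommRing R] [StarRing R] {U : Matrix (Fin m) (Fin m) R}
    (hU : U ∈ unitaryGroup (Fin m) R) : blockDiagOne U ∈ unitaryGroup (Fin (m + 1)) R := by
  rw [mem_unitaryGroup_iff, star_blockDiagOne, ← blockDiagOne_mul, mem_unitaryGroup_iff.mp hU,
    blockDiagOne_one]

lemma isUpperTriangular_blockDiagOne_mul_mul [Semiring R] {Q Z : Matrix (Fin m) (Fin m) R}
    {M : Matrix (Fin (m + 1)) (Fin (m + 1)) R} (hM : ∀ i : Fin m, M i.succ 0 = 0)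
    (h : (Q * M.submatrix Fin.succ Fin.succ * Z).IsUpperTriangular) :
    (blockDiagOne Q * M * blockDiagOne Z).IsUpperTriangular := by
  intro i j hij
  cases i using Fin.cases with
  | zero => exact absurd hij (Fin.not_lt_zero _)
  | succ i =>
    cases j using Fin.cases with
    | zero => simp [mul_apply, Fin.sum_univ_succ, hM]
    | succ j =>
      rw [← h (Fin.succ_lt_succ_iff.mp hij)]
      simp [mul_apply, Fin.sum_univ_succ, Finset.sum_mul]

end Matrix

theorem exists_unitary_isUpperTriangular_mul_mul {m : ℕ} (S T : Matrix (Fin m) (Fin m) ℂ) :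
    ∃ Q ∈ unitaryGroup (Fin m) ℂ, ∃ Z ∈ unitaryGroup (Fin m) ℂ,
      (Q * S * Z).IsUpperTriangular ∧ (Q * T * Z).IsUpperTriangular := by
  induction m with
  | zero => exact ⟨1, one_mem _, 1, one_mem _, fun i => i.elim0, fun i => i.elim0⟩
  | succ m ih =>
    obtain ⟨Q₁, hQ₁, Z₁, hZ₁, hcol⟩ := exists_unitary_mul_mul_apply_eq_zero S T 0
    obtain ⟨Q, hQ, Z, hZ, hS, hT⟩ := ih ((Q₁ * S * Z₁).submatrix Fin.succ Fin.succ)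
      ((Q₁ * T * Z₁).submatrix Fin.succ Fin.succ)
    have hassoc (M : Matrix (Fin (m + 1)) (Fin (m + 1)) ℂ) :
        blockDiagOne Q * Q₁ * M * (Z₁ * blockDiagOne Z) =
          blockDiagOne Q * (Q₁ * M * Z₁) * blockDiagOne Z := by
      simp only [Matrix.mul_assoc]
    refine ⟨blockDiagOne Q * Q₁, mul_mem (blockDiagOne_mem_unitaryGroup hQ) hQ₁,
      Z₁ * blockDiagOne Z, mul_mem hZ₁ (blockDiagOne_mem_unitaryGroup hZ), ?_, ?_⟩
    · rw [hassoc]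
      exact isUpperTriangular_blockDiagOne_mul_mul (fun i => (hcol i.succ i.succ_ne_zero).1) hS
    · rw [hassoc]
      exact isUpperTriangular_blockDiagOne_mul_mul (fun i => (hcol i.succ i.succ_ne_zero).2) hT

lemma Polynomial.C_add_X_mul_C_eq_zero_iff {R : Type*} [Semiring R] {a b : R} :
    C a + X * C b = 0 ↔ a = 0 ∧ b = 0 := by
  refine ⟨fun h => ⟨?_, ?_⟩, fun ⟨ha, hb⟩ => by simp [ha, hb]⟩
  · simpa using congrArg (coeff · 0) h
  · simpa using congrArg (coeff · 1) h

section Pencil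

variable {n : ℕ}

lemma pencilPoly_mul_mul (Q Z S T : Matrix (Fin n) (Fin n) ℂ) :
    pencilPoly (Q * S * Z) (Q * T * Z) = Q.map C * pencilPoly S T * Z.map C := by
  have h (M N : Matrix (Fin n) (Fin n) ℂ) : pencilPoly M N = M.map C + (X : ℂ[X]) • N.map C := by
    ext i j
    simp [pencilPoly]
  simp only [h, Matrix.map_mul, Matrix.mul_add, Matrix.add_mul, Matrix.mul_smul, Matrix.smul_mul]

lemma det_pencilPoly_mul_mul_eq_zero_iff {Q Z : Matrix (Fin n) (Fin n) ℂ} (hQ : IsUnit Q.det)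
    (hZ : IsUnit Z.det) (S T : Matrix (Fin n) (Fin n) ℂ) :
    (pencilPoly (Q * S * Z) (Q * T * Z)).det = 0 ↔ (pencilPoly S T).det = 0 := by
  rw [pencilPoly_mul_mul, det_mul, det_mul, ← RingHom.mapMatrix_apply, ← RingHom.mapMatrix_apply,
    ← RingHom.map_det, ← RingHom.map_det, (hZ.map C).mul_left_eq_zero,
    (hQ.map C).mul_right_eq_zero]

lemma det_pencilPoly_eq_zero_iff {M N : Matrix (Fin n) (Fin n) ℂ} (hM : M.IsUpperTriangular)
    (hN : N.IsUpperTriangular) : (pencilPoly M N).det = 0 ↔ ∃ i, M i i = 0 ∧ N i i = 0 := by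
  have h : (pencilPoly M N).IsUpperTriangular := fun i j hij => by
    simp [pencilPoly, hM hij, hN hij]
  rw [det_of_isUpperTriangular h, Finset.prod_eq_zero_iff]
  simp only [Finset.mem_univ, true_and, pencilPoly, of_apply, C_add_X_mul_C_eq_zero_iff]

end Pencil

section Frobenius

variable {ι 𝕜 : Type*} [Fintype ι] [RCLike 𝕜]

lemma ofReal_sum_sum_norm_sq_eq_trace {κ : Type*} [Fintype κ] (M : Matrix ι κ 𝕜) :
    ((∑ i, ∑ j, ‖M i j‖ ^ 2 : ℝ) : 𝕜) = (Mᴴ * M).trace := by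
  simp [trace, mul_apply, ← RCLike.conj_mul, Finset.sum_comm (γ := ι)]

lemma sum_sum_norm_sq_unitary_mul_mul [DecidableEq ι] {Q Z : Matrix ι ι 𝕜}
    (hQ : Q ∈ unitaryGroup ι 𝕜) (hZ : Z ∈ unitaryGroup ι 𝕜) (M : Matrix ι ι 𝕜) :
    ∑ i, ∑ j, ‖(Q * M * Z) i j‖ ^ 2 = ∑ i, ∑ j, ‖M i j‖ ^ 2 := by
  have hQ' : Qᴴ * Q = 1 := mem_unitaryGroup_iff'.mp hQ
  have hZ' : Z * Zᴴ = 1 := mem_unitaryGroup_iff.mp hZ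
  have h : (Q * M * Z)ᴴ * (Q * M * Z) = Zᴴ * (Mᴴ * M * Z) := calc
    _ = Zᴴ * Mᴴ * (Qᴴ * Q) * M * Z := by simp only [conjTranspose_mul, Matrix.mul_assoc]
    _ = Zᴴ * (Mᴴ * M * Z) := by simp only [hQ', Matrix.mul_one, Matrix.mul_assoc]
  apply RCLike.ofReal_injective (K := 𝕜)
  rw [ofReal_sum_sum_norm_sq_eq_trace, ofReal_sum_sum_norm_sq_eq_trace, h, trace_mul_comm,
    Matrix.mul_assoc, hZ', Matrix.mul_one]

end Frobenius

section Triangular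

variable {n : ℕ}

lemma pencilNormSq_unitary_mul_mul {Q Z : Matrix (Fin n) (Fin n) ℂ}
    (hQ : Q ∈ unitaryGroup (Fin n) ℂ) (hZ : Z ∈ unitaryGroup (Fin n) ℂ)
    (A B : Matrix (Fin n) (Fin n) ℂ) :
    pencilNormSq (Q * A * Z) (Q * B * Z) = pencilNormSq A B := by
  simp only [pencilNormSq, sum_sum_norm_sq_unitary_mul_mul hQ hZ]

lemma pencilNormSq_eq_sum (M N : Matrix (Fin n) (Fin n) ℂ) :
    pencilNormSq M N = ∑ i, ∑ j, (‖M i j‖ ^ 2 + ‖N i j‖ ^ 2) := by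
  simp only [pencilNormSq, Finset.sum_add_distrib]

noncomputable def triangularDistSq (hn : 0 < n) (M N : Matrix (Fin n) (Fin n) ℂ) : ℝ :=
  (∑ i, ∑ j, if j < i then ‖M i j‖ ^ 2 + ‖N i j‖ ^ 2 else 0) +
    Finset.univ.inf' ⟨⟨0, hn⟩, Finset.mem_univ _⟩ (fun i => ‖M i i‖ ^ 2 + ‖N i i‖ ^ 2)

lemma objFun_eq_triangularDistSq (hn : 0 < n) (A B Q Z : Matrix (Fin n) (Fin n) ℂ) :
    objFun hn A B Q Z = triangularDistSq hn (Q * A * Z) (Q * B * Z) := rfl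

lemma sum_sum_ite_lt_or_eq (g : Fin n → Fin n → ℝ) (k : Fin n) :
    ∑ i, ∑ j, (if j < i ∨ (i = k ∧ j = k) then g i j else 0) =
      (∑ i, ∑ j, if j < i then g i j else 0) + g k k := by
  have h (i j : Fin n) : (if j < i ∨ (i = k ∧ j = k) then g i j else 0) =
      (if j < i then g i j else 0) + if i = k ∧ j = k then g i j else 0 := by
    by_cases hji : j < i
    · have hk : ¬(i = k ∧ j = k) := fun h => by simp [h.1, h.2] at hji
      simp [hji, hk]
    · simp [hji]
  simp [h, Finset.sum_add_distrib, ite_and]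

lemma triangularDistSq_le (hn : 0 < n) (M N : Matrix (Fin n) (Fin n) ℂ)
    {S T : Matrix (Fin n) (Fin n) ℂ} (hS : S.IsUpperTriangular) (hT : T.IsUpperTriangular)
    {k : Fin n} (hSk : S k k = 0) (hTk : T k k = 0) :
    triangularDistSq hn M N ≤ pencilNormSq (M - S) (N - T) := by
  set g : Fin n → Fin n → ℝ := fun i j => ‖(M - S) i j‖ ^ 2 + ‖(N - T) i j‖ ^ 2
  have hlower : (∑ i, ∑ j, if j < i then ‖M i j‖ ^ 2 + ‖N i j‖ ^ 2 else 0) =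
      ∑ i, ∑ j, if j < i then g i j else 0 := by
    refine Finset.sum_congr rfl fun i _ => Finset.sum_congr rfl fun j _ => ?_
    split_ifs with h
    · simp [g, hS h, hT h]
    · rfl
  calc triangularDistSq hn M N ≤ (∑ i, ∑ j, if j < i then g i j else 0) + g k k := by
        rw [triangularDistSq, hlower]
        gcongr
        simpa [g, hSk, hTk] using Finset.inf'_le _ (Finset.mem_univ k)
    _ = ∑ i, ∑ j, (if j < i ∨ (i = k ∧ j = k) then g i j else 0) :=
        (sum_sum_ite_lt_or_eq g k).symm
    _ ≤ ∑ i, ∑ j, g i j := by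
        gcongr with i _ j
        split_ifs
        exacts [le_rfl, by positivity]
    _ = pencilNormSq (M - S) (N - T) := (pencilNormSq_eq_sum _ _).symm

lemma exists_pencilNormSq_eq_triangularDistSq (hn : 0 < n) (M N : Matrix (Fin n) (Fin n) ℂ) :
    ∃ S T : Matrix (Fin n) (Fin n) ℂ, S.IsUpperTriangular ∧ T.IsUpperTriangular ∧
      (∃ k, S k k = 0 ∧ T k k = 0) ∧ pencilNormSq (M - S) (N - T) = triangularDistSq hn M N := by
  obtain ⟨k, -, hk⟩ := Finset.exists_mem_eq_inf' ⟨⟨0, hn⟩, Finset.mem_univ _⟩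
    (fun i => ‖M i i‖ ^ 2 + ‖N i i‖ ^ 2)
  let cut (P : Matrix (Fin n) (Fin n) ℂ) : Matrix (Fin n) (Fin n) ℂ :=
    of fun i j => if j < i ∨ (i = k ∧ j = k) then 0 else P i j
  have hcut (P : Matrix (Fin n) (Fin n) ℂ) : (cut P).IsUpperTriangular :=
    fun i j (h : j < i) => by simp [cut, h]
  refine ⟨cut M, cut N, hcut M, hcut N, ⟨k, by simp [cut], by simp [cut]⟩, ?_⟩
  calc pencilNormSq (M - cut M) (N - cut N)
      = ∑ i, ∑ j, (if j < i ∨ (i = k ∧ j = k) then ‖M i j‖ ^ 2 + ‖N i j‖ ^ 2 else 0) := by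
        rw [pencilNormSq_eq_sum]
        refine Finset.sum_congr rfl fun i _ => Finset.sum_congr rfl fun j _ => ?_
        split_ifs with h <;> simp [cut, h]
    _ = triangularDistSq hn M N := by rw [sum_sum_ite_lt_or_eq, triangularDistSq, hk]

end Triangular

/-- The minimum of the squared distance to the singular pencils equals the minimum of
the objective function `f` over `U(n) × U(n)`. -/
theorem nearest_singular_pencil_eq_min_over_unitary {n : ℕ} (hn : 0 < n)
    (A B : Matrix (Fin n) (Fin n) ℂ) :
    sInf {d : ℝ | ∃ S T : Matrix (Fin n) (Fin n) ℂ,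
        (pencilPoly S T).det = 0 ∧ d = pencilNormSq (A - S) (B - T)} =
    sInf {d : ℝ | ∃ Q Z : Matrix (Fin n) (Fin n) ℂ,
        Q ∈ Matrix.unitaryGroup (Fin n) ℂ ∧ Z ∈ Matrix.unitaryGroup (Fin n) ℂ ∧
        d = objFun hn A B Q Z} := by
  have hunit {U : Matrix (Fin n) (Fin n) ℂ} (hU : U ∈ unitaryGroup (Fin n) ℂ) : IsUnit U.det :=
    UnitaryGroup.det_isUnit ⟨U, hU⟩
  apply csInf_eq_csInf_of_forall_exists_le
  · rintro _ ⟨S, T, hST, rfl⟩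
    obtain ⟨Q, hQ, Z, hZ, hS, hT⟩ := exists_unitary_isUpperTriangular_mul_mul S T
    obtain ⟨k, hSk, hTk⟩ := (det_pencilPoly_eq_zero_iff hS hT).1
      ((det_pencilPoly_mul_mul_eq_zero_iff (hunit hQ) (hunit hZ) S T).2 hST)
    refine ⟨_, ⟨Q, Z, hQ, hZ, rfl⟩, ?_⟩
    calc objFun hn A B Q Z
        ≤ pencilNormSq (Q * A * Z - Q * S * Z) (Q * B * Z - Q * T * Z) := by
          rw [objFun_eq_triangularDistSq]
          exact triangularDistSq_le hn _ _ hS hT hSk hTk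
      _ = pencilNormSq (A - S) (B - T) := by
          rw [← pencilNormSq_unitary_mul_mul hQ hZ (A - S), Matrix.mul_sub, Matrix.sub_mul,
            Matrix.mul_sub, Matrix.sub_mul]
  · rintro _ ⟨Q, Z, hQ, hZ, rfl⟩
    obtain ⟨S, T, hS, hT, ⟨k, hSk, hTk⟩, hdist⟩ :=
      exists_pencilNormSq_eq_triangularDistSq hn (Q * A * Z) (Q * B * Z)
    have hback (M : Matrix (Fin n) (Fin n) ℂ) : Q * (star Q * M * star Z) * Z = M := by
      simp only [← Matrix.mul_assoc, mem_unitaryGroup_iff.mp hQ, Matrix.one_mul]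
      simp only [Matrix.mul_assoc, mem_unitaryGroup_iff'.mp hZ, Matrix.mul_one]
    refine ⟨_, ⟨star Q * S * star Z, star Q * T * star Z, ?_, rfl⟩, le_of_eq ?_⟩
    · rw [← det_pencilPoly_mul_mul_eq_zero_iff (hunit hQ) (hunit hZ), hback, hback]
      exact (det_pencilPoly_eq_zero_iff hS hT).2 ⟨k, hSk, hTk⟩
    · rw [← pencilNormSq_unitary_mul_mul hQ hZ (A - _), Matrix.mul_sub, Matrix.sub_mul,
        Matrix.mul_sub, Matrix.sub_mul, hback, hback, hdist, objFun_eq_triangularDistSq]
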